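/- Fix an integer B ≥ 1 and let f(x) = x^{B/2−1} e^{−x/2} / (2^{B/2} Γ(B/2)). For τ > 0 define D(τ) = [−(B + τ²) ∫_{τ²}^∞ (τ − √x) f(x) dx + τ ∫_{τ²}^∞ (√x − τ)² f(x) dx] / [Bτ − B ∫_{τ²}^∞ (τ − √x) f(x) dx] and R(τ) = [B·D(τ) − ∫_{τ²}^∞ (√x − τ)² f(x) dx] / [D(τ)(B + τ² − ∫_{τ²}^∞ (√x − τ)² f(x) dx)]. Then lim_{τ→∞} R(τ) · τ² / B = 1, i.e., the group LASSO phase transition satisfies ρ ∼ B/τ² along the parametrization by the optimal threshold τ. -/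

import Mathlib

open MeasureTheory Real Set Filter

/-- The chi-square density with `B` degrees of freedom. -/
noncomputable def chiSqDensity (B : ℕ) (x : ℝ) : ℝ :=
  x ^ ((B : ℝ) / 2 - 1) * Real.exp (-x / 2) /
    ((2 : ℝ) ^ ((B : ℝ) / 2) * Real.Gamma ((B : ℝ) / 2))

/-- The undersampling ratio `δ` of the group LASSO phase transition, parametrized by
the optimal block soft threshold `τ`. -/
noncomputable def groupLassoDelta (B : ℕ) (τ : ℝ) : ℝ :=
  (-(B + τ ^ 2) * (∫ x in Ioi (τ ^ 2), (τ - Real.sqrt x) * chiSqDensity B x) +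
      τ * ∫ x in Ioi (τ ^ 2), (Real.sqrt x - τ) ^ 2 * chiSqDensity B x) /
    (B * τ - B * ∫ x in Ioi (τ ^ 2), (τ - Real.sqrt x) * chiSqDensity B x)

/-- The normalized sparsity `ρ` of the group LASSO phase transition, parametrized by
the optimal block soft threshold `τ`. -/
noncomputable def groupLassoRho (B : ℕ) (τ : ℝ) : ℝ :=
  (B * groupLassoDelta B τ - ∫ x in Ioi (τ ^ 2), (Real.sqrt x - τ) ^ 2 * chiSqDensity B x) /
    (groupLassoDelta B τ *
      (B + τ ^ 2 - ∫ x in Ioi (τ ^ 2), (Real.sqrt x - τ) ^ 2 * chiSqDensity B x))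

open scoped Nat Topology

/-!
With `a = ∫_{τ²}^∞ (√x - τ) f` and `c = ∫_{τ²}^∞ (√x - τ)² f`, the formulas for `δ` and `ρ`
collapse to `ρ = B a / ((B + τ²) a + τ c)`, so `ρ τ² / B = (B / τ² + 1 + c / (τ a))⁻¹` and it
suffices that `c / (τ a) → 0`. Both integrals are controlled by `f(τ²)`: for large `τ` the density
is at most `f(τ²) e^{-(x - τ²)/4}` beyond `τ²` and at least `f(τ²) e^{-1/2} / 2` on `[τ², τ² + 1]`,
while `√x - τ` is comparable to `(x - τ²) / τ` there. Hence `c ≤ 32 f(τ²) / τ²` and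
`τ a ≥ f(τ²) e^{-1/2} / 12`, so `c / (τ a) = O(1 / τ²)`.
-/

theorem integrableOn_Ioi_comp_sub {h : ℝ → ℝ} (s : ℝ) (hh : IntegrableOn h (Ioi 0)) :
    IntegrableOn (fun x => h (x - s)) (Ioi s) := by
  have := ((measurePreserving_sub_right volume s).integrableOn_comp_preimage
    (measurableEmbedding_subRight s) (f := h) (s := Ioi 0)).2 hh
  simpa [Function.comp_def] using this

theorem setIntegral_Ioi_comp_sub (h : ℝ → ℝ) (s : ℝ) :
    ∫ x in Ioi s, h (x - s) = ∫ u in Ioi 0, h u := by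
  have := (measurePreserving_sub_right volume s).setIntegral_preimage_emb
    (measurableEmbedding_subRight s) h (Ioi 0)
  simpa using this

theorem integrableOn_pow_mul_exp_neg_mul (k : ℕ) {r : ℝ} (hr : 0 < r) :
    IntegrableOn (fun u : ℝ => u ^ k * exp (-(r * u))) (Ioi 0) := by
  have := integrableOn_rpow_mul_exp_neg_mul_rpow (s := k) (p := 1) (b := r)
    (by linarith [(Nat.cast_nonneg k : (0 : ℝ) ≤ k)]) one_pos hr
  refine this.congr_fun (fun u _ => ?_) measurableSet_Ioi
  simp [Real.rpow_natCast]

theorem integral_pow_mul_exp_neg_mul (k : ℕ) {r : ℝ} (hr : 0 < r) :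
    ∫ u in Ioi (0 : ℝ), u ^ k * exp (-(r * u)) = k ! / r ^ (k + 1) := by
  have := integral_rpow_mul_exp_neg_mul_Ioi (a := k + 1) (by positivity) hr
  rw [Real.Gamma_nat_eq_factorial, one_div, Real.inv_rpow hr.le, add_sub_cancel_right] at this
  simp only [Real.rpow_natCast] at this
  rw [this, ← Nat.cast_succ, Real.rpow_natCast, inv_mul_eq_div]

theorem integrableOn_Ioi_const_mul_pow_sub_mul_exp (k : ℕ) {r : ℝ} (hr : 0 < r) (c s : ℝ) :
    IntegrableOn (fun x => c * ((x - s) ^ k * exp (-(r * (x - s))))) (Ioi s) :=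
  integrableOn_Ioi_comp_sub s ((integrableOn_pow_mul_exp_neg_mul k hr).const_mul c)

theorem chiSqDensity_nonneg (B : ℕ) {x : ℝ} (hx : 0 ≤ x) : 0 ≤ chiSqDensity B x := by
  unfold chiSqDensity
  positivity

theorem chiSqDensity_pos {B : ℕ} (hB : 0 < B) {x : ℝ} (hx : 0 < x) : 0 < chiSqDensity B x := by
  have := Real.Gamma_pos_of_pos (by positivity : (0 : ℝ) < B / 2)
  unfold chiSqDensity
  positivity

theorem measurable_chiSqDensity (B : ℕ) : Measurable (chiSqDensity B) := by
  unfold chiSqDensity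
  fun_prop

theorem tendsto_chiSqDensity_atTop (B : ℕ) : Tendsto (chiSqDensity B) atTop (𝓝 0) := by
  have := (tendsto_rpow_mul_exp_neg_mul_atTop_nhds_zero ((B : ℝ) / 2 - 1) (1 / 2)
    one_half_pos).div_const ((2 : ℝ) ^ ((B : ℝ) / 2) * Real.Gamma ((B : ℝ) / 2))
  rw [zero_div] at this
  refine this.congr fun x => ?_
  unfold chiSqDensity
  ring_nf

theorem chiSqDensity_eq_mul_rpow_mul_exp (B : ℕ) {t x : ℝ} (ht : 0 < t) (hx : 0 < x) :
    chiSqDensity B x = chiSqDensity B t * (x / t) ^ ((B : ℝ) / 2 - 1) * exp (-(x - t) / 2) := by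
  unfold chiSqDensity
  rw [Real.div_rpow hx.le ht.le, show -x / 2 = -t / 2 + -(x - t) / 2 by ring, Real.exp_add]
  have : t ^ ((B : ℝ) / 2 - 1) ≠ 0 := (Real.rpow_pos_of_pos ht _).ne'
  field_simp

theorem chiSqDensity_le_mul_exp (B : ℕ) {t x : ℝ} (ht : 0 < t) (hBt : (B : ℝ) / 2 - 1 ≤ t / 4)
    (hx : t ≤ x) : chiSqDensity B x ≤ chiSqDensity B t * exp (-(x - t) / 4) := by
  set p : ℝ := (B : ℝ) / 2 - 1
  have hxt : 1 ≤ x / t := (one_le_div ht).2 hx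
  have hpow : (x / t) ^ p ≤ exp ((x - t) / 4) := by
    rcases le_total p 0 with hp | hp
    · exact (Real.rpow_le_one_of_one_le_of_nonpos hxt hp).trans (Real.one_le_exp (by linarith))
    · calc (x / t) ^ p ≤ exp (x / t - 1) ^ p := by
            gcongr
            linarith [Real.add_one_le_exp (x / t - 1)]
        _ = exp (p * ((x - t) / t)) := by rw [← Real.exp_mul, mul_comm, sub_div, div_self ht.ne']
        _ ≤ exp ((x - t) / 4) := by
            gcongr
            calc p * ((x - t) / t) ≤ t / 4 * ((x - t) / t) := by gcongr
              _ = (x - t) / 4 := by field_simp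
  rw [chiSqDensity_eq_mul_rpow_mul_exp B ht (ht.trans_le hx), mul_assoc]
  gcongr
  · exact chiSqDensity_nonneg B ht.le
  calc (x / t) ^ p * exp (-(x - t) / 2) ≤ exp ((x - t) / 4) * exp (-(x - t) / 2) := by gcongr
    _ = exp (-(x - t) / 4) := by rw [← Real.exp_add]; ring_nf

theorem chiSqDensity_ge_mul_exp (B : ℕ) {t x : ℝ} (ht : 0 < t) (hx : t ≤ x) (hx' : x ≤ 2 * t) :
    chiSqDensity B t * exp (-(x - t) / 2) / 2 ≤ chiSqDensity B x := by
  have hxt : 1 ≤ x / t := (one_le_div ht).2 hx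
  have hpow : 1 / 2 ≤ (x / t) ^ ((B : ℝ) / 2 - 1) :=
    calc 1 / 2 ≤ (x / t) ^ (-1 : ℝ) := by
          rw [Real.rpow_neg_one, inv_eq_one_div]
          gcongr
          rwa [div_le_iff₀ ht]
      _ ≤ (x / t) ^ ((B : ℝ) / 2 - 1) :=
          Real.rpow_le_rpow_of_exponent_le hxt (by linarith [(Nat.cast_nonneg B : (0 : ℝ) ≤ B)])
  rw [chiSqDensity_eq_mul_rpow_mul_exp B ht (ht.trans_le hx)]
  have := chiSqDensity_nonneg B ht.le
  calc chiSqDensity B t * exp (-(x - t) / 2) / 2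
      = chiSqDensity B t * (1 / 2) * exp (-(x - t) / 2) := by ring
    _ ≤ _ := by gcongr

theorem sqrt_sub_le_div {τ x : ℝ} (hτ : 0 < τ) (hx : τ ^ 2 ≤ x) :
    √x - τ ≤ (x - τ ^ 2) / (2 * τ) := by
  have hsq : √x ^ 2 = x := Real.sq_sqrt (by nlinarith)
  rw [le_div_iff₀ (by positivity)]
  nlinarith [sq_nonneg (√x - τ)]

theorem div_le_sqrt_sub {τ x : ℝ} (hτ : 0 < τ) (hx : τ ^ 2 ≤ x) (hx' : x ≤ 4 * τ ^ 2) :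
    (x - τ ^ 2) / (3 * τ) ≤ √x - τ := by
  have hsq : √x ^ 2 = x := Real.sq_sqrt (by nlinarith)
  have hle : √x ≤ 2 * τ := Real.sqrt_le_iff.2 ⟨by positivity, by linarith⟩
  have hge : τ ≤ √x := Real.le_sqrt_of_sq_le hx
  rw [div_le_iff₀ (by positivity)]
  nlinarith

/-- `E[(χ - τ)₊ ^ k]` for a chi-distributed `χ` with `B` degrees of freedom. -/
noncomputable def chiExcessMoment (B k : ℕ) (τ : ℝ) : ℝ :=
  ∫ x in Ioi (τ ^ 2), (√x - τ) ^ k * chiSqDensity B x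

theorem setIntegral_Ioc_sub (c t : ℝ) : ∫ x in Ioc t (t + 1), c * (x - t) = c / 2 := by
  rw [← intervalIntegral.integral_of_le (by linarith), intervalIntegral.integral_const_mul,
    intervalIntegral.integral_comp_sub_right (fun x => x), integral_id]
  ring

section ExcessMoments

variable {B : ℕ} {τ : ℝ}

theorem excess_pow_mul_chiSqDensity_nonneg (k : ℕ) {x : ℝ} (hx : τ ^ 2 ≤ x) :
    0 ≤ (√x - τ) ^ k * chiSqDensity B x :=
  mul_nonneg (pow_nonneg (sub_nonneg.2 (Real.le_sqrt_of_sq_le hx)) k)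
    (chiSqDensity_nonneg B ((sq_nonneg τ).trans hx))

theorem chiExcessMoment_nonneg (k : ℕ) : 0 ≤ chiExcessMoment B k τ :=
  setIntegral_nonneg measurableSet_Ioi fun _ hx =>
    excess_pow_mul_chiSqDensity_nonneg k (le_of_lt hx)

theorem excess_pow_mul_chiSqDensity_le (k : ℕ) (hτ : 0 < τ) (hBτ : (B : ℝ) / 2 - 1 ≤ τ ^ 2 / 4)
    {x : ℝ} (hx : τ ^ 2 ≤ x) :
    (√x - τ) ^ k * chiSqDensity B x ≤
      chiSqDensity B (τ ^ 2) / (2 * τ) ^ k * ((x - τ ^ 2) ^ k * exp (-(1 / 4 * (x - τ ^ 2)))) := by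
  calc (√x - τ) ^ k * chiSqDensity B x
      ≤ ((x - τ ^ 2) / (2 * τ)) ^ k * (chiSqDensity B (τ ^ 2) * exp (-(x - τ ^ 2) / 4)) := by
        gcongr
        · exact chiSqDensity_nonneg B ((sq_nonneg τ).trans hx)
        · exact sub_nonneg.2 (Real.le_sqrt_of_sq_le hx)
        · exact sqrt_sub_le_div hτ hx
        · exact chiSqDensity_le_mul_exp B (by positivity) hBτ hx
    _ = _ := by
        rw [div_pow, show -(x - τ ^ 2) / 4 = -(1 / 4 * (x - τ ^ 2)) by ring]
        field_simp

theorem integrableOn_excess_pow_mul_chiSqDensity (k : ℕ) (hτ : 0 < τ)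
    (hBτ : (B : ℝ) / 2 - 1 ≤ τ ^ 2 / 4) :
    IntegrableOn (fun x => (√x - τ) ^ k * chiSqDensity B x) (Ioi (τ ^ 2)) := by
  have hmeas : Measurable fun x => (√x - τ) ^ k * chiSqDensity B x :=
    ((Real.continuous_sqrt.measurable.sub measurable_const).pow_const k).mul
      (measurable_chiSqDensity B)
  refine (integrableOn_Ioi_const_mul_pow_sub_mul_exp k (by norm_num : (0 : ℝ) < 1 / 4)
    (chiSqDensity B (τ ^ 2) / (2 * τ) ^ k) (τ ^ 2)).mono' hmeas.aestronglyMeasurable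
    ((ae_restrict_iff' measurableSet_Ioi).2 (ae_of_all _ fun x hx => ?_))
  rw [Real.norm_of_nonneg (excess_pow_mul_chiSqDensity_nonneg k (le_of_lt hx))]
  exact excess_pow_mul_chiSqDensity_le k hτ hBτ (le_of_lt hx)

theorem chiExcessMoment_le (k : ℕ) (hτ : 0 < τ) (hBτ : (B : ℝ) / 2 - 1 ≤ τ ^ 2 / 4) :
    chiExcessMoment B k τ ≤ chiSqDensity B (τ ^ 2) * k ! * 4 ^ (k + 1) / (2 * τ) ^ k := by
  calc chiExcessMoment B k τ
      ≤ ∫ x in Ioi (τ ^ 2), chiSqDensity B (τ ^ 2) / (2 * τ) ^ k *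
          ((x - τ ^ 2) ^ k * exp (-(1 / 4 * (x - τ ^ 2)))) :=
        setIntegral_mono_on (integrableOn_excess_pow_mul_chiSqDensity k hτ hBτ)
          (integrableOn_Ioi_const_mul_pow_sub_mul_exp k (by norm_num) _ _) measurableSet_Ioi
          fun x hx => excess_pow_mul_chiSqDensity_le k hτ hBτ (le_of_lt hx)
    _ = chiSqDensity B (τ ^ 2) * k ! * 4 ^ (k + 1) / (2 * τ) ^ k := by
        rw [setIntegral_Ioi_comp_sub (fun u => chiSqDensity B (τ ^ 2) / (2 * τ) ^ k *
          (u ^ k * exp (-(1 / 4 * u)))), integral_const_mul,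
          integral_pow_mul_exp_neg_mul k (by norm_num), one_div, inv_pow, div_inv_eq_mul]
        ring

theorem chiExcessMoment_one_ge (hτ : 1 ≤ τ) (hBτ : (B : ℝ) / 2 - 1 ≤ τ ^ 2 / 4) :
    chiSqDensity B (τ ^ 2) * exp (-1 / 2) / (12 * τ) ≤ chiExcessMoment B 1 τ := by
  have hτ0 : 0 < τ := by linarith
  have hf := chiSqDensity_nonneg B (sq_nonneg τ)
  have hint := integrableOn_excess_pow_mul_chiSqDensity (B := B) 1 hτ0 hBτ
  have hpointwise : ∀ x ∈ Ioc (τ ^ 2) (τ ^ 2 + 1),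
      chiSqDensity B (τ ^ 2) * exp (-1 / 2) / (6 * τ) * (x - τ ^ 2) ≤
        (√x - τ) ^ 1 * chiSqDensity B x := by
    rintro x ⟨hx, hx'⟩
    have hsqrt := div_le_sqrt_sub hτ0 hx.le (by nlinarith)
    have hdens : chiSqDensity B (τ ^ 2) * exp (-1 / 2) / 2 ≤ chiSqDensity B x :=
      calc chiSqDensity B (τ ^ 2) * exp (-1 / 2) / 2
          ≤ chiSqDensity B (τ ^ 2) * exp (-(x - τ ^ 2) / 2) / 2 := by gcongr; linarith
        _ ≤ chiSqDensity B x := chiSqDensity_ge_mul_exp B (by positivity) hx.le (by nlinarith)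
    calc chiSqDensity B (τ ^ 2) * exp (-1 / 2) / (6 * τ) * (x - τ ^ 2)
        = (x - τ ^ 2) / (3 * τ) * (chiSqDensity B (τ ^ 2) * exp (-1 / 2) / 2) := by
          field_simp; ring
      _ ≤ (√x - τ) ^ 1 * chiSqDensity B x := by
          rw [pow_one]
          gcongr
          exact sub_nonneg.2 (Real.le_sqrt_of_sq_le hx.le)
  calc chiSqDensity B (τ ^ 2) * exp (-1 / 2) / (12 * τ)
      = ∫ x in Ioc (τ ^ 2) (τ ^ 2 + 1),
          chiSqDensity B (τ ^ 2) * exp (-1 / 2) / (6 * τ) * (x - τ ^ 2) := by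
        rw [setIntegral_Ioc_sub]; ring
    _ ≤ ∫ x in Ioc (τ ^ 2) (τ ^ 2 + 1), (√x - τ) ^ 1 * chiSqDensity B x :=
        setIntegral_mono_on (Continuous.integrableOn_Ioc (by fun_prop))
          (hint.mono_set Ioc_subset_Ioi_self) measurableSet_Ioc hpointwise
    _ ≤ chiExcessMoment B 1 τ := by
        refine setIntegral_mono_set hint ?_ Ioc_subset_Ioi_self.eventuallyLE
        exact (ae_restrict_iff' measurableSet_Ioi).2 (ae_of_all _ fun x hx =>
          excess_pow_mul_chiSqDensity_nonneg 1 (le_of_lt hx))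

end ExcessMoments

theorem chiExcessMoment_two_le {B : ℕ} {τ : ℝ} (hτ : 0 < τ) (hBτ : (B : ℝ) / 2 - 1 ≤ τ ^ 2 / 4) :
    chiExcessMoment B 2 τ ≤ 32 * chiSqDensity B (τ ^ 2) / τ ^ 2 :=
  (chiExcessMoment_le 2 hτ hBτ).trans_eq (by simp only [Nat.factorial]; field_simp; ring)

theorem chiExcessMoment_two_div_le {B : ℕ} (hB : 0 < B) {τ : ℝ} (hτ : 1 ≤ τ)
    (hBτ : (B : ℝ) / 2 - 1 ≤ τ ^ 2 / 4) :
    chiExcessMoment B 2 τ / (τ * chiExcessMoment B 1 τ) ≤ 384 / exp (-1 / 2) / τ ^ 2 := by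
  have hτ0 : 0 < τ := by linarith
  have hf := chiSqDensity_pos hB (by positivity : 0 < τ ^ 2)
  calc chiExcessMoment B 2 τ / (τ * chiExcessMoment B 1 τ)
      ≤ (32 * chiSqDensity B (τ ^ 2) / τ ^ 2) /
          (τ * (chiSqDensity B (τ ^ 2) * exp (-1 / 2) / (12 * τ))) := by
        gcongr
        · exact chiExcessMoment_two_le hτ0 hBτ
        · exact chiExcessMoment_one_ge hτ hBτ
    _ = 384 / exp (-1 / 2) / τ ^ 2 := by
        field_simp
        norm_num

theorem eventually_one_le_and_le_sq_div_four (B : ℕ) :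
    ∀ᶠ τ : ℝ in atTop, 1 ≤ τ ∧ (B : ℝ) / 2 - 1 ≤ τ ^ 2 / 4 := by
  filter_upwards [eventually_ge_atTop (2 * (B : ℝ) + 1)] with τ hτ
  have := B.cast_nonneg (α := ℝ)
  constructor <;> nlinarith

theorem tendsto_chiExcessMoment_two_div {B : ℕ} (hB : 0 < B) :
    Tendsto (fun τ => chiExcessMoment B 2 τ / (τ * chiExcessMoment B 1 τ)) atTop (𝓝 0) := by
  refine tendsto_of_tendsto_of_tendsto_of_le_of_le' tendsto_const_nhds
    ((tendsto_const_nhds (x := 384 / exp (-1 / 2))).div_atTop (tendsto_pow_atTop two_ne_zero))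
    ?_ ?_
  · filter_upwards [eventually_one_le_and_le_sq_div_four B] with τ ⟨hτ, _⟩
    exact div_nonneg (chiExcessMoment_nonneg 2)
      (mul_nonneg (by linarith) (chiExcessMoment_nonneg 1))
  · filter_upwards [eventually_one_le_and_le_sq_div_four B] with τ ⟨hτ, hBτ⟩
    exact chiExcessMoment_two_div_le hB hτ hBτ

theorem groupLassoRho_eq {B : ℕ} (hB : 0 < B) {τ : ℝ} (hτ : 0 < τ)
    (hm₁ : 0 < chiExcessMoment B 1 τ) (hm₂ : chiExcessMoment B 2 τ < B + τ ^ 2) :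
    groupLassoRho B τ = B * chiExcessMoment B 1 τ /
      ((B + τ ^ 2) * chiExcessMoment B 1 τ + τ * chiExcessMoment B 2 τ) := by
  have hneg : ∫ x in Ioi (τ ^ 2), (τ - √x) * chiSqDensity B x = -chiExcessMoment B 1 τ := by
    rw [chiExcessMoment, ← integral_neg]
    congr 1 with x
    ring
  have hδ : groupLassoDelta B τ = ((B + τ ^ 2) * chiExcessMoment B 1 τ +
      τ * chiExcessMoment B 2 τ) / (B * (τ + chiExcessMoment B 1 τ)) := by
    rw [groupLassoDelta, hneg, ← chiExcessMoment]
    congr 1 <;> ring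
  have := chiExcessMoment_nonneg (B := B) (τ := τ) 2
  have : (B + τ ^ 2) * chiExcessMoment B 1 τ + τ * chiExcessMoment B 2 τ ≠ 0 := by positivity
  have : B + τ ^ 2 - chiExcessMoment B 2 τ ≠ 0 := by linarith
  have : τ + chiExcessMoment B 1 τ ≠ 0 := by positivity
  rw [groupLassoRho, hδ, ← chiExcessMoment]
  field_simp
  ring

theorem groupLassoRho_mul_sq_div_eventuallyEq {B : ℕ} (hB : 0 < B) :
    (fun τ : ℝ => groupLassoRho B τ * τ ^ 2 / B) =ᶠ[atTop]
      fun τ => (B / τ ^ 2 + 1 + chiExcessMoment B 2 τ / (τ * chiExcessMoment B 1 τ))⁻¹ := by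
  have hdensity : ∀ᶠ τ : ℝ in atTop, chiSqDensity B (τ ^ 2) < 1 / 32 :=
    ((tendsto_chiSqDensity_atTop B).comp (tendsto_pow_atTop two_ne_zero)).eventually_lt_const
      (by norm_num)
  filter_upwards [eventually_one_le_and_le_sq_div_four B, hdensity] with τ ⟨hτ, hBτ⟩ hf
  have hτ0 : 0 < τ := by linarith
  have hf0 := chiSqDensity_pos hB (by positivity : 0 < τ ^ 2)
  have hm₁ : 0 < chiExcessMoment B 1 τ :=
    lt_of_lt_of_le (by positivity) (chiExcessMoment_one_ge hτ hBτ)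
  have hm₂ : chiExcessMoment B 2 τ < B + τ ^ 2 :=
    calc chiExcessMoment B 2 τ ≤ 32 * chiSqDensity B (τ ^ 2) / τ ^ 2 :=
          chiExcessMoment_two_le hτ0 hBτ
      _ ≤ 32 * chiSqDensity B (τ ^ 2) := div_le_self (by positivity) (by nlinarith)
      _ < B + τ ^ 2 := by nlinarith
  rw [groupLassoRho_eq hB hτ0 hm₁ hm₂]
  field_simp

/-- The group LASSO phase transition satisfies `ρ ∼ B/τ²` along the parametrization by the
optimal threshold `τ`. -/
theorem stmt10 (B : ℕ) (hB : 1 ≤ B) :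
    Tendsto (fun τ : ℝ => groupLassoRho B τ * τ ^ 2 / B) atTop (nhds 1) := by
  have hinv_sq : Tendsto (fun τ : ℝ => (B : ℝ) / τ ^ 2) atTop (𝓝 0) :=
    tendsto_const_nhds.div_atTop (tendsto_pow_atTop two_ne_zero)
  rw [tendsto_congr' (groupLassoRho_mul_sq_div_eventuallyEq hB)]
  simpa using ((hinv_sq.add_const 1).add (tendsto_chiExcessMoment_two_div hB)).inv₀ (by norm_num)
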